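/- Let X be a δ-hyperbolic connected graph (δ ≥ 1). There exist ε > 0 and s0 = 50δ such that for each s ≥ s0 the following holds: let x, y be vertices of X, let B_1, …, B_k be pairwise disjoint balls of radius s centred at points on a geodesic [x,y], each centre at distance at least s from {x,y}, and let α be a path from x to y that avoids all the B_i. Then the length of α is at least k·(1+ε)^s. -/

import Mathlib

/-!
Measure progress along `[x, y]` by `F v = (d(x,v) - d(y,v)) / 2`, which is 1-Lipschitz and on
`[x, y]` is arclength from `x` shifted by `-d(x,y)/2`. Centres of disjoint `s`-balls on `[x, y]`
are more than `s` apart, so the windows `[F mᵢ - s/2, F mᵢ + s/2]` are disjoint and `α` crosses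
them during disjoint stretches. For the stretch crossing the window of `mᵢ`, join its ends `u, v`
by a geodesic and pick `w` on it with `F w ≈ F mᵢ`: thinness of the triangles `(u, v, x)` and
`(v, x, y)` puts `w` within `2δ` of `[x, y]`, hence within `4δ + 1` of `mᵢ`. A path of length at
most `2ⁿ` comes within `δ n + 1` of every point of a geodesic with the same ends, so the stretch,
which stays outside the `s`-ball about `mᵢ`, has length at least `2 ^ (s / 2δ) = (1 + ε) ^ s`.
-/

open SimpleGraph

/-- A graph has uniformly bounded degree if there is a uniform finite bound on
the cardinality of all neighbour sets. -/
def BddDegree {V : Type*} (G : SimpleGraph V) : Prop :=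
  ∃ D : ℕ, ∀ v : V, (G.neighborSet v).encard ≤ D

/-- A walk is geodesic if its length realizes the graph distance between its endpoints. -/
def SimpleGraph.Walk.IsGeodesic {V : Type*} {G : SimpleGraph V} {x y : V}
    (w : G.Walk x y) : Prop :=
  w.length = G.dist x y

/-- A graph is `δ`-hyperbolic if each side of every geodesic triangle is contained in the
closed `δ`-neighbourhood of the union of the other two sides. -/
def GraphHyperbolic {V : Type*} (G : SimpleGraph V) (δ : ℝ) : Prop :=
  ∀ ⦃a b c : V⦄ (γ₁ : G.Walk a b) (γ₂ : G.Walk b c) (γ₃ : G.Walk c a),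
    γ₁.IsGeodesic → γ₂.IsGeodesic → γ₃.IsGeodesic →
      ∀ u ∈ γ₁.support, ∃ v, (v ∈ γ₂.support ∨ v ∈ γ₃.support) ∧ (G.dist u v : ℝ) ≤ δ

/-- `x` admits an `(L,s,C)`-bigon with respect to the basepoint `x₀`: two paths from `x₀`
to `x`, each of length at most `L·d(x₀,x)`, such that any vertex of the first path outside
the `C`-neighbourhood of `{x₀, x}` is at distance more than `s` from any vertex of the
second path outside that neighbourhood. -/
def IsBigonAt {V : Type*} (G : SimpleGraph V) (x₀ : V) (L s C : ℝ) (x : V) : Prop :=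
  ∃ α₁ α₂ : G.Walk x₀ x,
    ((α₁.length : ℝ) ≤ L * G.dist x₀ x) ∧ ((α₂.length : ℝ) ≤ L * G.dist x₀ x) ∧
    ∀ u ∈ α₁.support, ∀ v ∈ α₂.support,
      (C < (G.dist x₀ u : ℝ) ∧ C < (G.dist x u : ℝ)) →
      (C < (G.dist x₀ v : ℝ) ∧ C < (G.dist x v : ℝ)) →
      s < (G.dist u v : ℝ)

/-- The set `B^X(L,s,C)` of vertices admitting an `(L,s,C)`-bigon. -/
def bigonSet {V : Type*} (G : SimpleGraph V) (x₀ : V) (L s C : ℝ) : Set V :=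
  {x | IsBigonAt G x₀ L s C x}

/-- The closed ball of radius `n` about `x` in the graph metric. -/
def gBall {V : Type*} (G : SimpleGraph V) (x : V) (n : ℕ) : Set V :=
  {v | G.dist x v ≤ n}

/-- `X` has exponentially many fat bigons at `x₀`. -/
def HasExpManyFatBigons {V : Type*} (G : SimpleGraph V) (x₀ : V) : Prop :=
  ∃ s₀ c L : ℝ, 0 ≤ s₀ ∧ 1 < c ∧ 1 < L ∧
    ∀ s : ℝ, s₀ ≤ s → ∃ C : ℝ, 0 ≤ C ∧
      {n : ℕ | (c ^ n : ℝ) ≤ ((bigonSet G x₀ L s C ∩ gBall G x₀ n).ncard : ℝ)}.Infinite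

/-- `X` has no fat bigons at `x₀`. -/
def HasNoFatBigons {V : Type*} (G : SimpleGraph V) (x₀ : V) : Prop :=
  ∀ L : ℝ, 1 ≤ L → ∃ s : ℝ, 0 ≤ s ∧ ∀ C : ℝ, 0 ≤ C →
    ∃ R : ℕ, ∀ x ∈ bigonSet G x₀ L s C, G.dist x₀ x ≤ R

/-- A coarse embedding of the graph `G` into the graph `H`, with multiplicative constant `K`
and compression function `ρ`. -/
def IsCoarseEmbedding {V W : Type*} (G : SimpleGraph V) (H : SimpleGraph W)
    (f : V → W) (K : ℝ) (ρ : ℕ → ℕ) : Prop :=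
  1 ≤ K ∧ Filter.Tendsto ρ Filter.atTop Filter.atTop ∧
    ∀ x y : V, (ρ (G.dist x y) : ℝ) ≤ (H.dist (f x) (f y) : ℝ) ∧
      (H.dist (f x) (f y) : ℝ) ≤ K * (G.dist x y : ℝ)

/-- The Cayley graph of a group with respect to a (symmetric) set `S`. -/
def cayleyGraph (G : Type*) [Group G] (S : Set G) : SimpleGraph G :=
  SimpleGraph.fromRel (fun x y => x⁻¹ * y ∈ S)

/-- The Cayley graph of `G` w.r.t. the basepoint `1` has exponential growth:
`|B_n(1)|^(1/n)` converges to a limit `> 1`. -/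
def HasExpGrowth {V : Type*} (G : SimpleGraph V) (x₀ : V) : Prop :=
  ∃ a : ℝ, 1 < a ∧
    Filter.Tendsto (fun n : ℕ => ((gBall G x₀ n).ncard : ℝ) ^ ((n : ℝ)⁻¹))
      Filter.atTop (nhds a)

/-- `Div_X(n) ≤ M`: for all vertices `a b` with `d(a,b) ≤ n` and every `c ∉ {a, b}`, there is
a path from `a` to `b` of length at most `M` avoiding the ball around `c` of radius
`(1/2)·d(c,{a,b}) − 2`. -/
def DivLE {V : Type*} (G : SimpleGraph V) (n : ℕ) (M : ℝ) : Prop :=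
  ∀ a b c : V, G.dist a b ≤ n → c ≠ a → c ≠ b →
    ∃ w : G.Walk a b, (w.length : ℝ) ≤ M ∧
      ∀ u ∈ w.support, ((min (G.dist c a) (G.dist c b) : ℝ)) / 2 - 2 < (G.dist c u : ℝ)

/-- A group (given as a graph) is one-ended. -/
def OneEnded {V : Type*} (G : SimpleGraph V) : Prop :=
  ∃! e, e ∈ G.end

namespace SimpleGraph.Walk

variable {V : Type*} {G : SimpleGraph V} {u v : V}

lemma dist_getVert_le_sub (p : G.Walk u v) {i j : ℕ} (hij : i ≤ j) :
    G.dist (p.getVert i) (p.getVert j) ≤ j - i := by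
  have h := dist_le ((p.drop i).take (j - i))
  rw [take_length, drop_getVert, Nat.add_sub_cancel' hij] at h
  exact h.trans inf_le_left

lemma IsGeodesic.reverse {p : G.Walk u v} (hp : p.IsGeodesic) : p.reverse.IsGeodesic := by
  rw [IsGeodesic, length_reverse, dist_comm]
  exact hp

lemma IsGeodesic.dist_getVert {p : G.Walk u v} (hp : p.IsGeodesic) (i : ℕ) :
    G.dist u (p.getVert i) = min i p.length := by
  rw [← length_eq_dist_of_subwalk hp (isSubwalk_take p i), take_length]

lemma IsGeodesic.dist_getVert_end {p : G.Walk u v} (hp : p.IsGeodesic) (i : ℕ) :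
    G.dist (p.getVert i) v = p.length - i := by
  rw [← length_eq_dist_of_subwalk hp (isSubwalk_drop p i), drop_length]

lemma IsGeodesic.dist_add_dist {p : G.Walk u v} (hp : p.IsGeodesic) {w : V}
    (hw : w ∈ p.support) : G.dist u w + G.dist w v = G.dist u v := by
  obtain ⟨i, rfl, hi⟩ := mem_support_iff_exists_getVert.1 hw
  have h₁ := hp.dist_getVert i
  have h₂ := hp.dist_getVert_end i
  have h₃ : p.length = G.dist u v := hp
  omega

lemma IsGeodesic.dist_le_abs_sub {p : G.Walk u v} (hp : p.IsGeodesic) {a b : V}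
    (ha : a ∈ p.support) (hb : b ∈ p.support) :
    (G.dist a b : ℝ) ≤ |(G.dist u a : ℝ) - G.dist u b| := by
  obtain ⟨i, rfl, hi⟩ := mem_support_iff_exists_getVert.1 ha
  obtain ⟨j, rfl, hj⟩ := mem_support_iff_exists_getVert.1 hb
  rw [hp.dist_getVert, hp.dist_getVert, min_eq_left hi, min_eq_left hj]
  rcases le_total i j with h | h
  · have hd : (G.dist (p.getVert i) (p.getVert j) : ℝ) ≤ (j - i : ℕ) := by
      exact_mod_cast p.dist_getVert_le_sub h
    rw [Nat.cast_sub h] at hd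
    exact hd.trans (abs_sub_comm (j : ℝ) i ▸ le_abs_self _)
  · have hd : (G.dist (p.getVert j) (p.getVert i) : ℝ) ≤ (i - j : ℕ) := by
      exact_mod_cast p.dist_getVert_le_sub h
    rw [Nat.cast_sub h, dist_comm] at hd
    exact hd.trans (le_abs_self _)

end SimpleGraph.Walk

lemma SimpleGraph.Connected.exists_isGeodesic {V : Type*} {G : SimpleGraph V}
    (hconn : G.Connected) (u v : V) : ∃ γ : G.Walk u v, γ.IsGeodesic :=
  hconn.exists_walk_length_eq_dist u v

namespace SimpleGraph

variable {V : Type*} {G : SimpleGraph V} {x y : V}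

noncomputable def progress (G : SimpleGraph V) (x y v : V) : ℝ :=
  ((G.dist x v : ℝ) - G.dist y v) / 2

lemma progress_start : G.progress x y x = -(G.dist x y : ℝ) / 2 := by
  simp [progress, dist_comm]

lemma progress_end : G.progress x y y = (G.dist x y : ℝ) / 2 := by
  simp [progress]

lemma Connected.abs_progress_sub_le (hconn : G.Connected) (x y a b : V) :
    |G.progress x y a - G.progress x y b| ≤ G.dist a b := by
  have t₁ : (G.dist x a : ℝ) ≤ G.dist x b + G.dist b a := by exact_mod_cast hconn.dist_triangle
  have t₂ : (G.dist x b : ℝ) ≤ G.dist x a + G.dist a b := by exact_mod_cast hconn.dist_triangle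
  have t₃ : (G.dist y a : ℝ) ≤ G.dist y b + G.dist b a := by exact_mod_cast hconn.dist_triangle
  have t₄ : (G.dist y b : ℝ) ≤ G.dist y a + G.dist a b := by exact_mod_cast hconn.dist_triangle
  rw [dist_comm (u := b)] at t₁ t₃
  rw [abs_le, progress, progress]
  constructor <;> linarith

lemma Connected.progress_getVert_succ_le (hconn : G.Connected) {u v : V} (p : G.Walk u v)
    (i : ℕ) : G.progress x y (p.getVert (i + 1)) ≤ G.progress x y (p.getVert i) + 1 := by
  have h := (abs_le.1 (hconn.abs_progress_sub_le x y (p.getVert (i + 1)) (p.getVert i))).2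
  have hd : (G.dist (p.getVert (i + 1)) (p.getVert i) : ℝ) ≤ 1 := by
    rw [dist_comm]
    exact_mod_cast (p.dist_getVert_le_sub i.le_succ).trans (by omega)
  linarith

lemma Walk.IsGeodesic.progress_le_progress_end (hconn : G.Connected) {u q : V}
    {γ : G.Walk x u} (hγ : γ.IsGeodesic) (hq : q ∈ γ.support) :
    G.progress x y q ≤ G.progress x y u := by
  have h : (G.dist x q : ℝ) + G.dist q u = G.dist x u := by exact_mod_cast hγ.dist_add_dist hq
  have t : (G.dist y u : ℝ) ≤ G.dist y q + G.dist q u := by exact_mod_cast hconn.dist_triangle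
  rw [progress, progress]
  linarith

lemma Walk.IsGeodesic.progress_start_le_progress (hconn : G.Connected) {v q : V}
    {γ : G.Walk v y} (hγ : γ.IsGeodesic) (hq : q ∈ γ.support) :
    G.progress x y v ≤ G.progress x y q := by
  have h : (G.dist v q : ℝ) + G.dist q y = G.dist v y := by exact_mod_cast hγ.dist_add_dist hq
  have t : (G.dist x v : ℝ) ≤ G.dist x q + G.dist q v := by exact_mod_cast hconn.dist_triangle
  rw [dist_comm (u := q)] at t
  rw [progress, progress, dist_comm (u := y) (v := v), dist_comm (u := y) (v := q)]
  linarith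

lemma Walk.IsGeodesic.progress_sub_progress_start {g : G.Walk x y} (hg : g.IsGeodesic) {a : V}
    (ha : a ∈ g.support) : G.progress x y a - G.progress x y x = G.dist x a := by
  have h : (G.dist x a : ℝ) + G.dist a y = G.dist x y := by exact_mod_cast hg.dist_add_dist ha
  rw [progress_start, progress, dist_comm (u := y)]
  linarith

lemma Walk.IsGeodesic.progress_end_sub_progress {g : G.Walk x y} (hg : g.IsGeodesic) {a : V}
    (ha : a ∈ g.support) : G.progress x y y - G.progress x y a = G.dist y a := by
  have h : (G.dist x a : ℝ) + G.dist a y = G.dist x y := by exact_mod_cast hg.dist_add_dist ha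
  rw [progress_end, progress, dist_comm (u := y)]
  linarith

lemma Walk.IsGeodesic.dist_le_abs_progress_sub {g : G.Walk x y} (hg : g.IsGeodesic) {a b : V}
    (ha : a ∈ g.support) (hb : b ∈ g.support) :
    (G.dist a b : ℝ) ≤ |G.progress x y a - G.progress x y b| := by
  have h := hg.dist_le_abs_sub ha hb
  rwa [← hg.progress_sub_progress_start ha, ← hg.progress_sub_progress_start hb,
    sub_sub_sub_cancel_right] at h

end SimpleGraph

/-- Junk value `0` if `f` never reaches `τ`. -/
noncomputable def hitTime (f : ℕ → ℝ) (τ : ℝ) : ℕ :=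
  sInf {n | τ ≤ f n}

section hitTime

variable {f : ℕ → ℝ} {τ τ' : ℝ} {N : ℕ}

lemma le_apply_hitTime (h : τ ≤ f N) : τ ≤ f (hitTime f τ) :=
  Nat.sInf_mem (s := {n | τ ≤ f n}) ⟨N, h⟩

lemma hitTime_le (h : τ ≤ f N) : hitTime f τ ≤ N :=
  Nat.sInf_le h

lemma apply_lt_of_lt_hitTime {n : ℕ} (h : n < hitTime f τ) : f n < τ :=
  not_le.1 (Nat.notMem_of_lt_sInf h)

lemma hitTime_mono (hτ : τ ≤ τ') (h : τ' ≤ f N) : hitTime f τ ≤ hitTime f τ' :=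
  hitTime_le (hτ.trans (le_apply_hitTime h))

lemma apply_hitTime_lt_add_one (hstep : ∀ n, f (n + 1) ≤ f n + 1) (h₀ : f 0 < τ)
    (h : τ ≤ f N) : f (hitTime f τ) < τ + 1 := by
  obtain ⟨n, hn⟩ : ∃ n, hitTime f τ = n + 1 := by
    refine Nat.exists_eq_succ_of_ne_zero fun h' => ?_
    have := le_apply_hitTime h
    rw [h'] at this
    linarith
  have := apply_lt_of_lt_hitTime (f := f) (τ := τ) (n := n) (by omega)
  rw [hn]
  linarith [hstep n]

/-- If the windows `[a i, b i]` do not overlap, the index intervals during which `f` crosses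
them do not overlap either. -/
lemma sum_hitTime_sub_le {ι : Type*} [Fintype ι] (a b : ι → ℝ) (hab : ∀ i, a i ≤ b i)
    (hsep : Pairwise fun i j => b i ≤ a j ∨ b j ≤ a i) (hN : ∀ i, b i ≤ f N) :
    ∑ i, (hitTime f (b i) - hitTime f (a i)) ≤ N := by
  classical
  set I : ι → Finset ℕ := fun i => Finset.Ico (hitTime f (a i)) (hitTime f (b i))
  have hdisj : ((Finset.univ : Finset ι) : Set ι).PairwiseDisjoint I := by
    intro i _ j _ hij
    have key : ∀ i j, b i ≤ a j → Disjoint (I i) (I j) := fun i j h => by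
      have := hitTime_mono h ((hab j).trans (hN j))
      simp only [I, Finset.disjoint_left, Finset.mem_Ico]
      omega
    exact (hsep hij).elim (key i j) fun h => (key j i h).symm
  calc ∑ i, (hitTime f (b i) - hitTime f (a i)) = ∑ i, (I i).card := by simp [I]
    _ = (Finset.univ.biUnion I).card := (Finset.card_biUnion hdisj).symm
    _ ≤ (Finset.range N).card := Finset.card_le_card fun n hn => by
      obtain ⟨i, -, hi⟩ := Finset.mem_biUnion.1 hn
      have := hitTime_le (hN i)
      simp only [I, Finset.mem_Ico] at hi
      exact Finset.mem_range.2 (by omega)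
    _ = N := Finset.card_range N

end hitTime

namespace SimpleGraph.Connected

variable {V : Type*} {G : SimpleGraph V}

lemma exists_mem_support_progress_mem_Ico (hconn : G.Connected) (x y : V) {u v : V}
    (p : G.Walk u v) {c : ℝ} (hu : G.progress x y u < c) (hv : c ≤ G.progress x y v) :
    ∃ w ∈ p.support, c ≤ G.progress x y w ∧ G.progress x y w < c + 1 := by
  set f : ℕ → ℝ := fun n => G.progress x y (p.getVert n)
  have hf₀ : f 0 < c := by simpa [f] using hu
  have hfN : c ≤ f p.length := by simpa [f] using hv
  exact ⟨p.getVert (hitTime f c), p.getVert_mem_support _, le_apply_hitTime hfN,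
    apply_hitTime_lt_add_one (f := f) (hconn.progress_getVert_succ_le p) hf₀ hfN⟩

end SimpleGraph.Connected

namespace GraphHyperbolic

open Walk

variable {V : Type*} {G : SimpleGraph V} {δ : ℝ}

/-- Bridson–Haefliger III.H.1.6: split the path in halves and apply thinness to the triangle
formed by the geodesic and geodesics to the midpoint of the path. -/
theorem exists_dist_le_of_length_le_two_pow (hX : GraphHyperbolic G δ) (hconn : G.Connected)
    (n : ℕ) {a b : V} (σ : G.Walk a b) (hσ : σ.length ≤ 2 ^ n) {γ : G.Walk a b}
    (hγ : γ.IsGeodesic) {w : V} (hw : w ∈ γ.support) :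
    ∃ z ∈ σ.support, (G.dist w z : ℝ) ≤ δ * n + 1 := by
  induction n generalizing a b σ γ w with
  | zero =>
    have hwa : G.dist a w + G.dist w b ≤ 1 := (hγ.dist_add_dist hw).trans_le
      ((dist_le σ).trans (by simpa using hσ))
    refine ⟨a, σ.start_mem_support, ?_⟩
    rw [dist_comm, Nat.cast_zero, mul_zero, zero_add]
    exact_mod_cast (Nat.le_add_right _ _).trans hwa
  | succ n ih =>
    set c := σ.getVert (2 ^ n)
    obtain ⟨γ₂, hγ₂⟩ := hconn.exists_isGeodesic b c
    obtain ⟨γ₃, hγ₃⟩ := hconn.exists_isGeodesic c a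
    obtain ⟨v, hv, hwv⟩ := hX γ γ₂ γ₃ hγ hγ₂ hγ₃ w hw
    obtain ⟨z, hz, hvz⟩ : ∃ z ∈ σ.support, (G.dist v z : ℝ) ≤ δ * n + 1 := by
      rcases hv with hv | hv
      · have hlen : (σ.drop (2 ^ n)).reverse.length ≤ 2 ^ n := by
          rw [length_reverse, drop_length]
          rw [pow_succ] at hσ
          omega
        obtain ⟨z, hz, hvz⟩ := ih _ hlen hγ₂ hv
        rw [support_reverse, List.mem_reverse] at hz
        exact ⟨z, (isSubwalk_drop σ _).support_subset hz, hvz⟩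
      · have hv' : v ∈ γ₃.reverse.support := by rwa [support_reverse, List.mem_reverse]
        obtain ⟨z, hz, hvz⟩ := ih _ ((take_length _ _).trans_le inf_le_left)
          hγ₃.reverse hv'
        exact ⟨z, (isSubwalk_take σ _).support_subset hz, hvz⟩
    have hwz : (G.dist w z : ℝ) ≤ G.dist w v + G.dist v z := by
      exact_mod_cast hconn.dist_triangle
    refine ⟨z, hz, ?_⟩
    push_cast
    linarith

/-- Thinness of `(u, v, x)` puts `w` near `[v, x]` rather than `[x, u]`, along which progress
stays below that of `u`; thinness of `(v, x, y)` then puts it near `[x, y]` rather than `[y, v]`. -/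
theorem exists_mem_support_dist_le_two_mul (hX : GraphHyperbolic G δ) (hconn : G.Connected)
    {x y : V} {g : G.Walk x y} (hg : g.IsGeodesic) {u v : V} {γ : G.Walk u v}
    (hγ : γ.IsGeodesic) {w : V} (hw : w ∈ γ.support)
    (hu : G.progress x y u + δ < G.progress x y w)
    (hv : G.progress x y w + 2 * δ < G.progress x y v) :
    ∃ p ∈ g.support, (G.dist w p : ℝ) ≤ 2 * δ := by
  obtain ⟨γ₂, hγ₂⟩ := hconn.exists_isGeodesic v x
  obtain ⟨γ₃, hγ₃⟩ := hconn.exists_isGeodesic x u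
  obtain ⟨γ₄, hγ₄⟩ := hconn.exists_isGeodesic y v
  obtain ⟨q, hq, hwq⟩ := hX γ γ₂ γ₃ hγ hγ₂ hγ₃ w hw
  have hFwq := abs_le.1 ((hconn.abs_progress_sub_le x y w q).trans hwq)
  have hq₂ : q ∈ γ₂.support := hq.resolve_right fun hq₃ => by
    linarith [IsGeodesic.progress_le_progress_end (y := y) hconn hγ₃ hq₃]
  obtain ⟨p, hp, hqp⟩ := hX γ₂ g γ₄ hγ₂ hg hγ₄ q hq₂
  have hFqp := abs_le.1 ((hconn.abs_progress_sub_le x y q p).trans hqp)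
  have hpg : p ∈ g.support := hp.resolve_right fun hp₄ => by
    have hp₄' : p ∈ γ₄.reverse.support := by rwa [support_reverse, List.mem_reverse]
    linarith [IsGeodesic.progress_start_le_progress (x := x) hconn hγ₄.reverse hp₄']
  have hwp : (G.dist w p : ℝ) ≤ G.dist w q + G.dist q p := by exact_mod_cast hconn.dist_triangle
  exact ⟨p, hpg, by linarith⟩

theorem two_rpow_le_length (hX : GraphHyperbolic G δ) (hconn : G.Connected) (hδ : 0 < δ)
    {x y : V} {g : G.Walk x y} (hg : g.IsGeodesic) {m : V} (hm : m ∈ g.support) {s : ℝ}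
    (hs : 10 * δ + 4 ≤ s) {u v : V} (σ : G.Walk u v)
    (hu : G.progress x y u < G.progress x y m - s / 2 + 1)
    (hv : G.progress x y m + s / 2 ≤ G.progress x y v)
    (hσ : ∀ z ∈ σ.support, s < G.dist m z) :
    (2 : ℝ) ^ (s / (2 * δ)) ≤ σ.length := by
  by_contra! hlt
  set n := ⌈s / (2 * δ)⌉₊
  have hσn : σ.length ≤ 2 ^ n := by
    have h := Real.rpow_le_rpow_of_exponent_le one_le_two (Nat.le_ceil (s / (2 * δ)))
    rw [Real.rpow_natCast] at h
    exact_mod_cast (hlt.trans_le h).le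
  have hδn : δ * n < s / 2 + δ := calc
    δ * n < δ * (s / (2 * δ) + 1) :=
      mul_lt_mul_of_pos_left (Nat.ceil_lt_add_one (div_nonneg (by linarith) (by linarith))) hδ
    _ = s / 2 + δ := by field_simp
  obtain ⟨γ, hγ⟩ := hconn.exists_isGeodesic u v
  obtain ⟨w, hw, hmw, hwm⟩ :=
    hconn.exists_mem_support_progress_mem_Ico x y γ (c := G.progress x y m) (by linarith)
      (by linarith)
  obtain ⟨p, hp, hwp⟩ := hX.exists_mem_support_dist_le_two_mul hconn hg hγ hw (by linarith)
    (by linarith)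
  obtain ⟨z, hz, hwz⟩ := hX.exists_dist_le_of_length_le_two_pow hconn n σ hσn hγ hw
  have hmp : (G.dist m p : ℝ) ≤ 2 * δ + 1 := calc
    (G.dist m p : ℝ) ≤ |G.progress x y m - G.progress x y p| :=
      hg.dist_le_abs_progress_sub hm hp
    _ ≤ |G.progress x y m - G.progress x y w| + |G.progress x y w - G.progress x y p| :=
      abs_sub_le _ _ _
    _ ≤ 1 + 2 * δ := add_le_add (abs_le.2 ⟨by linarith, by linarith⟩)
      ((hconn.abs_progress_sub_le x y w p).trans hwp)
    _ = 2 * δ + 1 := add_comm _ _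
  have hmz : (G.dist m z : ℝ) ≤ G.dist m p + G.dist p w + G.dist w z := by
    have h₁ := hconn.dist_triangle (u := m) (v := p) (w := z)
    have h₂ := hconn.dist_triangle (u := p) (v := w) (w := z)
    exact_mod_cast h₁.trans (by omega)
  rw [dist_comm (u := p)] at hmz
  -- `d(m, z) ≤ (2δ + 1) + 2δ + (δ n + 1) < s / 2 + 5δ + 2 ≤ s`
  linarith [hσ z hz]

theorem two_rpow_le_hitTime_sub (hX : GraphHyperbolic G δ) (hconn : G.Connected) (hδ : 0 < δ)
    {x y : V} {g : G.Walk x y} (hg : g.IsGeodesic) {m : V} (hm : m ∈ g.support) {s : ℝ}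
    (hs : 10 * δ + 4 ≤ s) (hxm : s ≤ G.dist x m) (hym : s ≤ G.dist y m) (α : G.Walk x y)
    (hα : ∀ z ∈ α.support, s < G.dist m z) :
    (2 : ℝ) ^ (s / (2 * δ)) ≤
      ((hitTime (fun n => G.progress x y (α.getVert n)) (G.progress x y m + s / 2) -
        hitTime (fun n => G.progress x y (α.getVert n)) (G.progress x y m - s / 2) : ℕ) :
        ℝ) := by
  set f : ℕ → ℝ := fun n => G.progress x y (α.getVert n)
  have hf₀ : f 0 = G.progress x y x := by simp [f]
  have hfN : f α.length = G.progress x y y := by simp [f]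
  have hmx := hg.progress_sub_progress_start hm
  have hmy := hg.progress_end_sub_progress hm
  have hhi : G.progress x y m + s / 2 ≤ f α.length := by linarith
  set A := hitTime f (G.progress x y m - s / 2)
  set B := hitTime f (G.progress x y m + s / 2)
  have hAB : A ≤ B := hitTime_mono (by linarith) hhi
  have hvB : (α.drop A).getVert (B - A) = α.getVert B := by
    rw [drop_getVert, Nat.add_sub_cancel' hAB]
  calc (2 : ℝ) ^ (s / (2 * δ)) ≤ ((α.drop A).take (B - A)).length := by
        refine hX.two_rpow_le_length hconn hδ hg hm hs _ ?_ ?_ fun z hz => hα z ?_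
        · exact apply_hitTime_lt_add_one (f := f) (N := α.length)
            (hconn.progress_getVert_succ_le α) (by linarith) (by linarith)
        · exact hvB ▸ le_apply_hitTime hhi
        · exact ((isSubwalk_take _ _).trans (isSubwalk_drop _ _)).support_subset hz
    _ ≤ (B - A : ℕ) := by exact_mod_cast (take_length _ _).trans_le inf_le_left

end GraphHyperbolic

open Real in
/-- (Claim 2.) In a `δ`-hyperbolic connected graph there exist `ε > 0` and
`s₀ = 50δ` such that for all `s ≥ s₀`: if `B₁, …, B_k` are disjoint balls of radius `s`
centred at vertices of a geodesic `[x,y]`, each centre at distance at least `s` from `x`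
and `y`, then any path from `x` to `y` avoiding all the `Bᵢ` has length at least
`k·(1+ε)^s`. -/
theorem path_avoiding_balls_is_long
    {V : Type*} (X : SimpleGraph V) (hXconn : X.Connected)
    (δ : ℝ) (hδ : 1 ≤ δ) (hX : GraphHyperbolic X δ) :
    ∃ ε : ℝ, 0 < ε ∧
      ∀ s : ℝ, 50 * δ ≤ s →
        ∀ (x y : V) (g : X.Walk x y), g.IsGeodesic →
          ∀ (k : ℕ) (m : Fin k → V),
            (∀ i, m i ∈ g.support) →
            (∀ i, s ≤ (X.dist x (m i) : ℝ) ∧ s ≤ (X.dist y (m i) : ℝ)) →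
            (∀ i j, i ≠ j →
              Disjoint {v : V | (X.dist (m i) v : ℝ) ≤ s} {v : V | (X.dist (m j) v : ℝ) ≤ s}) →
            ∀ α : X.Walk x y,
              (∀ i, ∀ u ∈ α.support, s < (X.dist (m i) u : ℝ)) →
              (k : ℝ) * (1 + ε) ^ s ≤ (α.length : ℝ) := by
  have hδ₀ : 0 < δ := by linarith
  refine ⟨2 ^ (1 / (2 * δ)) - 1, sub_pos.2 (one_lt_rpow one_lt_two (by positivity)), ?_⟩
  intro s hs x y g hg k m hm hdist hdisj α hα
  rw [add_sub_cancel, ← rpow_mul zero_le_two, one_div_mul_eq_div]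
  set F := X.progress x y
  have hsep : Pairwise fun i j => F (m i) + s / 2 ≤ F (m j) - s / 2 ∨
      F (m j) + s / 2 ≤ F (m i) - s / 2 := by
    intro i j hij
    have hmij : s < X.dist (m i) (m j) := lt_of_not_ge fun h =>
      Set.disjoint_left.1 (hdisj i j hij) (h : m j ∈ {v | (X.dist (m i) v : ℝ) ≤ s})
        (by simp [(by linarith : (0 : ℝ) ≤ s)])
    rcases lt_abs.1 (hmij.trans_le (hg.dist_le_abs_progress_sub (hm i) (hm j))) with h | h
    · right; linarith
    · left; linarith
  have hlen := sum_hitTime_sub_le (f := fun n => F (α.getVert n)) (N := α.length)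
    (fun i => F (m i) - s / 2) (fun i => F (m i) + s / 2) (fun i => by linarith) hsep fun i => by
      have := hg.progress_end_sub_progress (hm i)
      simp only [Walk.getVert_length, F]
      linarith [(hdist i).2]
  calc (k : ℝ) * 2 ^ (s / (2 * δ)) = ∑ _i : Fin k, (2 : ℝ) ^ (s / (2 * δ)) := by simp
    _ ≤ _ := Finset.sum_le_sum fun i _ => hX.two_rpow_le_hitTime_sub hXconn hδ₀ hg (hm i)
      (by linarith) (hdist i).1 (hdist i).2 α (hα i)
    _ ≤ α.length := by exact_mod_cast hlen
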